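/- arXiv:1411.4817 — 3 statements merged into one kernel-verified Lean document; each statement's English description precedes it below -/
import Mathlib

section
/- Let (q_n) be a strictly increasing sequence of positive reals with q_{n+1} - q_n → ∞, and let (r_n) be any sequence of reals. Then the set E = {α ∈ (1,∞) : ‖α^{q_n} - r_n‖ → 0} is dense in (1,∞), where ‖x‖ denotes the distance from x to the nearest integer. -/
open Filter

/-- Distance from a real number to the nearest integer. -/
noncomputable def distNearestInt (x : ℝ) : ℝ := |x - round x|

open Filter

lemma exists_seq_step {α : Type*} (P : ℕ → α → Prop) (R : ℕ → α → α → Prop)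
    (h0 : ∃ x, P 0 x) (hstep : ∀ n x, P n x → ∃ y, P (n+1) y ∧ R n x y) :
    ∃ f : ℕ → α, (∀ n, P n (f n)) ∧ ∀ n, R n (f n) (f (n+1)) := by
  obtain ⟨x0, hx0⟩ := h0
  let F : (n : ℕ) → {x // P n x} := fun n => Nat.rec ⟨x0, hx0⟩
    (fun n ih => ⟨Classical.choose (hstep n ih.1 ih.2),
      (Classical.choose_spec (hstep n ih.1 ih.2)).1⟩) n
  refine ⟨fun n => (F n).1, fun n => (F n).2, fun n => ?_⟩
  exact (Classical.choose_spec (hstep n (F n).1 (F n).2)).2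

lemma target_lemma {u v Q t δ : ℝ} (hu : 0 < u) (hv : 0 < v) (hQ : 0 < Q) (hδ : 0 < δ)
    (hlen : u ^ Q + (1 + 2*δ) ≤ v ^ Q) :
    ∃ (m : ℤ) (u' v' : ℝ), u ≤ u' ∧ u' < v' ∧ v' ≤ v ∧
      u' ^ Q = m + t - δ ∧ v' ^ Q = m + t + δ := by
  have hQne : Q ≠ 0 := ne_of_gt hQ
  set m : ℤ := ⌈u ^ Q + δ - t⌉ with hm
  have h1 : u ^ Q + δ - t ≤ m := Int.le_ceil _
  have h2 : (m : ℝ) < u ^ Q + δ - t + 1 := Int.ceil_lt_add_one _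
  have huQ : 0 < u ^ Q := Real.rpow_pos_of_pos hu Q
  have hlo : u ^ Q ≤ m + t - δ := by linarith
  have hhi : m + t + δ ≤ v ^ Q := by linarith
  have hlo0 : 0 < m + t - δ := lt_of_lt_of_le huQ hlo
  refine ⟨m, (m + t - δ) ^ Q⁻¹, (m + t + δ) ^ Q⁻¹, ?_, ?_, ?_, ?_, ?_⟩
  · calc u = (u ^ Q) ^ Q⁻¹ := (Real.rpow_rpow_inv hu.le hQne).symm
      _ ≤ _ := Real.rpow_le_rpow huQ.le hlo (by positivity)
  · exact Real.rpow_lt_rpow hlo0.le (by linarith) (by positivity)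
  · calc (m + t + δ) ^ Q⁻¹ ≤ (v ^ Q) ^ Q⁻¹ :=
        Real.rpow_le_rpow (by linarith) hhi (by positivity)
      _ = v := Real.rpow_rpow_inv hv.le hQne
  · exact Real.rpow_inv_rpow hlo0.le hQne
  · exact Real.rpow_inv_rpow (by linarith) hQne

lemma stretch_lemma {A u v Q Q' : ℝ} (hA : 1 ≤ A) (hAu : A ≤ u) (huv : u ≤ v)
    (hQ : 0 < Q) (hQQ' : Q ≤ Q') :
    A ^ (Q' - Q) * (v ^ Q - u ^ Q) ≤ v ^ Q' - u ^ Q' := by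
  have hu : 0 < u := lt_of_lt_of_le one_pos (le_trans hA hAu)
  have hv : 0 < v := lt_of_lt_of_le hu huv
  have hd : (0:ℝ) ≤ Q' - Q := by linarith
  have e1 : v ^ Q' = v ^ (Q' - Q) * v ^ Q := by
    rw [← Real.rpow_add hv]; ring_nf
  have e2 : u ^ Q' = u ^ (Q' - Q) * u ^ Q := by
    rw [← Real.rpow_add hu]; ring_nf
  have h3 : A ^ (Q' - Q) ≤ u ^ (Q' - Q) := Real.rpow_le_rpow (by linarith) hAu hd
  have h4 : u ^ (Q' - Q) ≤ v ^ (Q' - Q) := Real.rpow_le_rpow hu.le huv hd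
  have h5 : u ^ Q ≤ v ^ Q := Real.rpow_le_rpow hu.le huv hQ.le
  have h6 : 0 < u ^ Q := Real.rpow_pos_of_pos hu Q
  have h7 : 0 < A ^ (Q' - Q) := Real.rpow_pos_of_pos (by linarith) _
  rw [e1, e2]
  nlinarith [Real.rpow_pos_of_pos hu (Q' - Q)]

lemma decay_lemma {δ e : ℕ → ℝ} (hδ0 : ∀ n, 0 ≤ δ n)
    (he : Tendsto e atTop (nhds 0))
    (h : ∀ n, δ (n+1) ≤ max (e (n+1)) (δ n / 2)) :
    Tendsto δ atTop (nhds 0) := by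
  rw [Metric.tendsto_atTop]
  intro c hc
  obtain ⟨M, hM⟩ := Metric.tendsto_atTop.1 he (c/2) (by linarith)
  have key : ∀ k, δ (M + k) ≤ max (c/2) (δ M / 2 ^ k) := by
    intro k; induction k with
    | zero => simpa using le_max_right (c/2) (δ M)
    | succ k ih =>
      have h1 := h (M + k)
      have he1 : e (M + k + 1) < c/2 := by
        have := hM (M + k + 1) (by omega)
        rw [Real.dist_eq, sub_zero] at this
        exact lt_of_abs_lt this
      have hmax : max (c/2) (δ M / 2 ^ k) / 2 ≤ max (c/2) (δ M / 2 ^ (k+1)) := by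
        rcases max_cases (c/2) (δ M / 2 ^ k) with ⟨hEq, _⟩ | ⟨hEq, _⟩ <;> rw [hEq]
        · calc c/2/2 ≤ c/2 := by linarith
            _ ≤ _ := le_max_left _ _
        · have : δ M / 2 ^ k / 2 = δ M / 2 ^ (k+1) := by rw [pow_succ]; ring
          rw [this]; exact le_max_right _ _
      have : δ (M + k) / 2 ≤ max (c/2) (δ M / 2 ^ (k+1)) :=
        le_trans (by linarith) hmax
      have hidx : M + (k+1) = M + k + 1 := rfl
      rw [hidx]
      exact le_trans h1 (max_le (le_trans he1.le (le_max_left _ _)) this)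
  obtain ⟨k0, hk0⟩ := pow_unbounded_of_one_lt (δ M / (c/2)) (one_lt_two (α := ℝ))
  have hk0' : δ M / 2 ^ k0 < c / 2 := by
    have h2 : (0:ℝ) < 2 ^ k0 := by positivity
    rw [div_lt_iff₀ h2]
    rw [div_lt_iff₀ (by linarith : (0:ℝ) < c/2)] at hk0
    linarith
  refine ⟨M + k0, fun n hn => ?_⟩
  have hkey := key (n - M)
  rw [Nat.add_sub_cancel' (by omega : M ≤ n)] at hkey
  have hle : δ M / 2 ^ (n - M) ≤ δ M / 2 ^ k0 := by
    gcongr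
    · exact hδ0 M
    · norm_num
    · omega
  rw [Real.dist_eq, sub_zero, abs_of_nonneg (hδ0 n)]
  calc δ n ≤ max (c/2) (δ M / 2 ^ (n - M)) := hkey
    _ < c := max_lt (by linarith) (by linarith)
lemma distNearestInt_le (x : ℝ) (m : ℤ) : distNearestInt x ≤ |x - m| := round_le x m

lemma rpow_base_tendsto {b : ℝ} (hb : 1 < b) :
    Tendsto (fun x : ℝ => b ^ x) atTop atTop := by
  have h0 : 0 < b := by linarith
  have h := Real.tendsto_exp_atTop.comp
    (Tendsto.const_mul_atTop (Real.log_pos hb) (tendsto_id (α := ℝ)))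
  exact h.congr fun x => (Real.rpow_def_of_pos h0 x).symm

theorem stmt0 (q r : ℕ → ℝ) (hmono : StrictMono q) (hpos : ∀ n, 0 < q n)
    (hgap : Tendsto (fun n => q (n + 1) - q n) atTop atTop) :
    Set.Ioi (1 : ℝ) ⊆
      closure {α : ℝ | α ∈ Set.Ioi 1 ∧
        Tendsto (fun n => distNearestInt (α ^ q n - r n)) atTop (nhds 0)} := by
  intro a ha
  have ha1 : (1:ℝ) < a := ha
  rw [Metric.mem_closure_iff]
  intro ε hε
  set ε' : ℝ := min ε 2 / 4 with hε'def
  have hε'pos : 0 < ε' := by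
    have : 0 < min ε 2 := lt_min hε (by norm_num)
    simp only [hε'def]; linarith
  have hε'le : 2 * ε' < ε := by
    have : min ε 2 ≤ ε := min_le_left _ _
    simp only [hε'def]; linarith
  set A : ℝ := a + ε' with hAdef
  set B : ℝ := a + 2 * ε' with hBdef
  have hA1 : 1 < A := by simp only [hAdef]; linarith
  have hAB : A < B := by simp only [hAdef, hBdef]; linarith
  have hA0 : (0:ℝ) < A := by linarith
  have hB0 : (0:ℝ) < B := by linarith
  -- q tends to infinity
  have hq_top : Tendsto q atTop atTop := by
    obtain ⟨N1, hN1⟩ := eventually_atTop.1 (hgap.eventually_ge_atTop 1)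
    have hstep : ∀ k : ℕ, q N1 + k ≤ q (N1 + k) := by
      intro k; induction k with
      | zero => simp
      | succ k ih =>
        have h1 := hN1 (N1 + k) (by omega)
        push_cast
        have : q (N1 + k) + 1 ≤ q (N1 + k + 1) := by linarith
        have hidx : N1 + (k + 1) = N1 + k + 1 := rfl
        rw [hidx]
        push_cast at ih
        linarith
    refine tendsto_atTop_atTop.2 fun b => ?_
    obtain ⟨k, hk⟩ := exists_nat_ge (b - q N1)
    refine ⟨N1 + k, fun n hn => ?_⟩
    have := hstep k
    have hmon : q (N1 + k) ≤ q n := hmono.monotone hn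
    linarith
  have hgA : Tendsto (fun n => A ^ (q (n+1) - q n)) atTop atTop :=
    (rpow_base_tendsto hA1).comp hgap
  have hAq : Tendsto (fun n => A ^ (q n)) atTop atTop :=
    (rpow_base_tendsto hA1).comp hq_top
  have hBAq : Tendsto (fun n => (B/A) ^ (q n)) atTop atTop :=
    (rpow_base_tendsto (by rw [lt_div_iff₀ hA0]; linarith)).comp hq_top
  have hev : ∀ᶠ n in atTop, 2 ≤ A ^ (q (n+1) - q n) ∧ 2 ≤ A ^ q n ∧ 2 ≤ (B/A) ^ q n :=
    (hgA.eventually_ge_atTop 2).and ((hAq.eventually_ge_atTop 2).and (hBAq.eventually_ge_atTop 2))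
  obtain ⟨N, hN⟩ := eventually_atTop.1 hev
  have hg2 : ∀ n : ℕ, 2 ≤ A ^ (q (N + n + 1) - q (N + n)) := fun n => (hN (N + n) (by omega)).1
  -- invariant
  set P : ℕ → ℝ × ℝ × ℝ → Prop := fun n x =>
    A ≤ x.1 ∧ x.1 < x.2.1 ∧ x.2.1 ≤ B ∧ 0 < x.2.2 ∧ x.2.2 ≤ 1/2 ∧
    1 ≤ x.2.2 * A ^ (q (N + n + 1) - q (N + n)) ∧
    ∃ m : ℤ, x.1 ^ q (N + n) = m + r (N + n) - x.2.2 ∧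
      x.2.1 ^ q (N + n) = m + r (N + n) + x.2.2 with hPdef
  set R : ℕ → ℝ × ℝ × ℝ → ℝ × ℝ × ℝ → Prop := fun n x y =>
    x.1 ≤ y.1 ∧ y.2.1 ≤ x.2.1 ∧
    y.2.2 ≤ max (A ^ (q (N + n + 1 + 1) - q (N + n + 1)))⁻¹ (x.2.2 / 2) with hRdef
  -- base case
  have hbase : ∃ x, P 0 x := by
    have h1 : 2 ≤ A ^ q N := (hN N le_rfl).2.1
    have h2 : 2 ≤ (B/A) ^ q N := (hN N le_rfl).2.2
    have hBq : B ^ q N = A ^ q N * (B/A) ^ q N := by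
      rw [← Real.mul_rpow hA0.le (by positivity)]
      congr 1; field_simp
    have hlen0 : A ^ q N + (1 + 2 * (1/2 : ℝ)) ≤ B ^ q N := by
      rw [hBq]; nlinarith
    obtain ⟨m, u0, v0, h3, h4, h5, h6, h7⟩ :=
      target_lemma (t := r N) hA0 hB0 (hpos N) (by norm_num : (0:ℝ) < 1/2) hlen0
    refine ⟨(u0, v0, 1/2), h3, h4, h5, by norm_num, le_rfl, ?_, m, ?_, ?_⟩
    · have := hg2 0
      simp only [Nat.add_zero] at this ⊢
      linarith
    · simpa using h6
    · simpa using h7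
  -- inductive step
  have hstep : ∀ n x, P n x → ∃ y, P (n+1) y ∧ R n x y := by
    rintro n ⟨u, v, δ⟩ ⟨h1, h2, h3, h4, h5, h6, m, hm1, hm2⟩
    simp only at h1 h2 h3 h4 h5 h6 hm1 hm2
    set g : ℝ := A ^ (q (N + n + 1) - q (N + n)) with hgdef
    set g' : ℝ := A ^ (q (N + n + 1 + 1) - q (N + n + 1)) with hg'def
    have hg : 2 ≤ g := hg2 n
    have hg' : 2 ≤ g' := hg2 (n + 1)
    have hg0 : 0 < g := by linarith
    have hg'0 : 0 < g' := by linarith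
    have hδg : 1 ≤ δ * g := h6
    set δ' : ℝ := max g'⁻¹ (min (δ/2) (δ * g - 1/2)) with hδ'def
    have hδ'pos : 0 < δ' :=
      lt_of_lt_of_le (by positivity) (le_max_left _ _)
    have hδ'le : δ' ≤ 1/2 := by
      apply max_le
      · rw [inv_le_comm₀ (by linarith) (by norm_num)]; linarith
      · exact le_trans (min_le_left _ _) (by linarith)
    have h1pδ' : 1 + 2 * δ' ≤ 2 * (δ * g) := by
      have hx : g'⁻¹ ≤ δ * g - 1/2 := by
        have : g'⁻¹ ≤ 1/2 := by rw [inv_le_comm₀ (by linarith) (by norm_num)]; linarith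
        linarith
      have hy : min (δ/2) (δ * g - 1/2) ≤ δ * g - 1/2 := min_le_right _ _
      have : δ' ≤ δ * g - 1/2 := max_le hx hy
      linarith
    have hu0 : 0 < u := by linarith
    have hv0 : 0 < v := by linarith
    have hQQ' : q (N + n) ≤ q (N + n + 1) := (hmono (by omega)).le
    have hst := stretch_lemma hA1.le h1 h2.le (hpos (N + n)) hQQ'
    have hdiff : v ^ q (N + n) - u ^ q (N + n) = 2 * δ := by rw [hm1, hm2]; ring
    rw [hdiff] at hst
    have hAu : A ^ (q (N + n + 1) - q (N + n)) ≤ u ^ (q (N + n + 1) - q (N + n)) :=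
      Real.rpow_le_rpow hA0.le h1 (by linarith)
    rw [← hgdef] at hst
    have hlen : u ^ q (N + n + 1) + (1 + 2 * δ') ≤ v ^ q (N + n + 1) := by linarith
    obtain ⟨m', u', v', j1, j2, j3, j4, j5⟩ :=
      target_lemma (t := r (N + n + 1)) hu0 hv0 (hpos (N + n + 1)) hδ'pos hlen
    refine ⟨(u', v', δ'), ⟨le_trans h1 j1, j2, le_trans j3 h3, hδ'pos, hδ'le, ?_, m', j4, j5⟩,
      j1, j3, ?_⟩
    · have : g'⁻¹ * g' ≤ δ' * g' :=
        mul_le_mul_of_nonneg_right (le_max_left _ _) hg'0.le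
      rw [inv_mul_cancel₀ (by linarith)] at this
      exact this
    · exact max_le (le_max_left _ _) (le_trans (min_le_left _ _) (le_max_right _ _))
  obtain ⟨f, hPf, hRf⟩ := exists_seq_step P R hbase hstep
  set u : ℕ → ℝ := fun n => (f n).1 with hudef
  set v : ℕ → ℝ := fun n => (f n).2.1 with hvdef
  set d : ℕ → ℝ := fun n => (f n).2.2 with hddef
  have hu_mono : Monotone u := monotone_nat_of_le_succ fun n => (hRf n).1
  have hv_anti : Antitone v := antitone_nat_of_succ_le fun n => (hRf n).2.1
  have huv : ∀ n, u n < v n := fun n => (hPf n).2.1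
  have hAu : ∀ n, A ≤ u n := fun n => (hPf n).1
  have hvB : ∀ n, v n ≤ B := fun n => (hPf n).2.2.1
  have hbdd : BddAbove (Set.range u) := ⟨B, by rintro _ ⟨n, rfl⟩; exact (huv n).le.trans (hvB n)⟩
  set α : ℝ := ⨆ n, u n with hαdef
  have hαu : ∀ n, u n ≤ α := fun n => le_ciSup hbdd n
  have hαv : ∀ n, α ≤ v n := by
    intro n
    refine ciSup_le fun m => ?_
    rcases le_total m n with h | h
    · exact le_trans (hu_mono h) (huv n).le
    · exact le_trans (huv m).le (hv_anti h)
  have hαA : A ≤ α := le_trans (hAu 0) (hαu 0)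
  have hαB : α ≤ B := le_trans (hαv 0) (hvB 0)
  have hα1 : 1 < α := lt_of_lt_of_le hA1 hαA
  -- d tends to 0
  have hd0 : ∀ n, 0 ≤ d n := fun n => (hPf n).2.2.2.1.le
  have he0 : Tendsto (fun n => (A ^ (q (N + n + 1) - q (N + n)))⁻¹) atTop (nhds 0) := by
    have h1 : Tendsto (fun n => A ^ (q (N + n + 1) - q (N + n))) atTop atTop := by
      have := hgA.comp (tendsto_add_atTop_nat N)
      refine this.congr fun n => ?_
      simp only [Function.comp_apply, Nat.add_comm n N]
    exact h1.inv_tendsto_atTop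
  have hdlim : Tendsto d atTop (nhds 0) := by
    refine decay_lemma hd0 he0 fun n => ?_
    exact (hRf n).2.2
  -- the tendsto property along shifted indices
  have hshift : Tendsto (fun n => distNearestInt (α ^ q (N + n) - r (N + n))) atTop (nhds 0) := by
    refine squeeze_zero (fun n => abs_nonneg _) (fun n => ?_) hdlim
    obtain ⟨m, hm1, hm2⟩ := (hPf n).2.2.2.2.2.2
    have hun0 : 0 < u n := lt_of_lt_of_le hA0 (hAu n)
    have l1 : u n ^ q (N + n) ≤ α ^ q (N + n) :=
      Real.rpow_le_rpow hun0.le (hαu n) (hpos _).le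
    have l2 : α ^ q (N + n) ≤ v n ^ q (N + n) :=
      Real.rpow_le_rpow (by linarith : (0:ℝ) ≤ α) (hαv n) (hpos _).le
    have l1' : (m : ℝ) + r (N + n) - d n ≤ α ^ q (N + n) := by rw [← hm1]; exact l1
    have l2' : α ^ q (N + n) ≤ (m : ℝ) + r (N + n) + d n := by rw [← hm2]; exact l2
    refine le_trans (distNearestInt_le _ m) ?_
    rw [abs_le]
    constructor <;> linarith
  -- conclude
  refine ⟨α, ⟨hα1, ?_⟩, ?_⟩
  · rw [← tendsto_add_atTop_iff_nat N]
    refine hshift.congr fun n => ?_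
    rw [Nat.add_comm]
  · rw [Real.dist_eq, abs_of_nonpos (by simp only [hAdef] at hαA; linarith)]
    simp only [hBdef] at hαB
    linarith
end

section
/- Let (q_n) be a strictly increasing sequence of positive reals with q_{n+1} - q_n → ∞ and ε > 0. Then there exists a strictly increasing sequence (q̃_n) of positive reals such that: (i) q̃_{n+1} ≤ (1+ε) q̃_n for all n, (ii) q̃_{n+1} - q̃_n → ∞, and (iii) the original sequence (q_n) is a subsequence of (q̃_n). -/
/-!
Cut each gap `[q n, q (n + 1)]` into `k n = ⌈(q (n + 1) - q n) / (ε q n)⌉` equal steps.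
A step is at most `ε q n`, which gives the ratio bound, and at least half of
`min (q (n + 1) - q n) (ε q n)`, which tends to infinity because both arguments do.
-/

open Filter Finset

/-- For strictly increasing `φ` with `φ 0 = 0`, the `n` with `φ n ≤ m < φ (n + 1)`. -/
def blockIndex (φ : ℕ → ℕ) (m : ℕ) : ℕ :=
  Nat.findGreatest (fun n => φ n ≤ m) m

section blockIndex

variable {φ : ℕ → ℕ}

theorem blockIndex_eq (hφ : StrictMono φ) {m n : ℕ} (h₁ : φ n ≤ m) (h₂ : m < φ (n + 1)) :
    blockIndex φ m = n := by
  refine Nat.findGreatest_eq_iff.2 ⟨(hφ.id_le n).trans h₁, fun _ => h₁, fun j hj _ hjm => ?_⟩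
  exact (h₂.trans_le (hφ.monotone hj)).not_ge hjm

theorem apply_blockIndex_le (h0 : φ 0 = 0) (m : ℕ) : φ (blockIndex φ m) ≤ m :=
  Nat.findGreatest_spec (P := fun n => φ n ≤ m) (Nat.zero_le m) (h0.trans_le (Nat.zero_le m))

theorem lt_apply_blockIndex_succ (hφ : StrictMono φ) (m : ℕ) : m < φ (blockIndex φ m + 1) := by
  by_contra! h
  exact Nat.findGreatest_is_greatest (Nat.lt_succ_self _) ((hφ.id_le _).trans h) h

theorem blockIndex_apply (hφ : StrictMono φ) (n : ℕ) : blockIndex φ (φ n) = n :=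
  blockIndex_eq hφ le_rfl (hφ n.lt_succ_self)

theorem blockIndex_mono : Monotone (blockIndex φ) := fun _ _ hmm' =>
  Nat.findGreatest_mono (fun _ hn => hn.trans hmm') hmm'

theorem tendsto_blockIndex_atTop (hφ : StrictMono φ) : Tendsto (blockIndex φ) atTop atTop :=
  tendsto_atTop_atTop_of_monotone blockIndex_mono fun n => ⟨φ n, (blockIndex_apply hφ n).ge⟩

end blockIndex

noncomputable def nodeStep (q : ℕ → ℝ) (φ : ℕ → ℕ) (n : ℕ) : ℝ :=
  (q (n + 1) - q n) / ((φ (n + 1) : ℝ) - φ n)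

noncomputable def interpolate (q : ℕ → ℝ) (φ : ℕ → ℕ) (m : ℕ) : ℝ :=
  q (blockIndex φ m) + ((m : ℝ) - φ (blockIndex φ m)) * nodeStep q φ (blockIndex φ m)

section interpolate

variable {q : ℕ → ℝ} {φ : ℕ → ℕ}

theorem interpolate_apply (hφ : StrictMono φ) (n : ℕ) : interpolate q φ (φ n) = q n := by
  simp [interpolate, blockIndex_apply hφ]

theorem interpolate_succ (hφ : StrictMono φ) (h0 : φ 0 = 0) (m : ℕ) :
    interpolate q φ (m + 1) = interpolate q φ m + nodeStep q φ (blockIndex φ m) := by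
  set n := blockIndex φ m with hn
  have h₁ : φ n ≤ m := apply_blockIndex_le h0 m
  have h₂ : m + 1 ≤ φ (n + 1) := lt_apply_blockIndex_succ hφ m
  rcases h₂.lt_or_eq with h₂ | h₂
  · have : blockIndex φ (m + 1) = n := blockIndex_eq hφ (by omega) h₂
    simp only [interpolate, this, ← hn]
    push_cast
    ring
  · have hgap : ((φ (n + 1) : ℝ) - φ n) ≠ 0 :=
      sub_ne_zero.2 (Nat.cast_injective.ne (hφ n.lt_succ_self).ne')
    have hcast : ((m : ℝ) + 1) = φ (n + 1) := by exact_mod_cast h₂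
    have hrise : ((φ (n + 1) : ℝ) - φ n) * nodeStep q φ n = q (n + 1) - q n :=
      mul_div_cancel₀ _ hgap
    rw [h₂, interpolate_apply hφ, interpolate, ← hn]
    linear_combination -hrise - nodeStep q φ n * hcast

theorem le_interpolate (hq : Monotone q) (hφ : Monotone φ) (h0 : φ 0 = 0) (m : ℕ) :
    q (blockIndex φ m) ≤ interpolate q φ m := by
  have h₁ : (φ (blockIndex φ m) : ℝ) ≤ m := by exact_mod_cast apply_blockIndex_le h0 m
  have hstep : 0 ≤ nodeStep q φ (blockIndex φ m) :=
    div_nonneg (sub_nonneg.2 (hq (Nat.le_succ _)))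
      (sub_nonneg.2 (by exact_mod_cast hφ (Nat.le_succ _)))
  exact le_add_of_nonneg_right (mul_nonneg (sub_nonneg.2 h₁) hstep)

theorem interpolate_strictMono (hq : StrictMono q) (hφ : StrictMono φ) (h0 : φ 0 = 0) :
    StrictMono (interpolate q φ) := by
  refine strictMono_nat_of_lt_succ fun m => ?_
  rw [interpolate_succ hφ h0]
  have hφ' : (φ (blockIndex φ m) : ℝ) < φ (blockIndex φ m + 1) := by exact_mod_cast hφ (by omega)
  exact lt_add_of_pos_right _ (div_pos (sub_pos.2 (hq (by omega))) (sub_pos.2 hφ'))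

end interpolate

theorem div_natCeil_div_le {d a : ℝ} (hd : 0 < d) (ha : 0 < a) : d / ⌈d / a⌉₊ ≤ a := by
  have hk : (0 : ℝ) < ⌈d / a⌉₊ := by exact_mod_cast Nat.ceil_pos.2 (div_pos hd ha)
  rw [div_le_iff₀ hk, ← div_le_iff₀' ha]
  exact Nat.le_ceil _

theorem min_le_two_mul_div_natCeil_div {d a : ℝ} (hd : 0 < d) (ha : 0 < a) :
    min d a ≤ 2 * (d / ⌈d / a⌉₊) := by
  have hk : (0 : ℝ) < ⌈d / a⌉₊ := by exact_mod_cast Nat.ceil_pos.2 (div_pos hd ha)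
  have hlt : (⌈d / a⌉₊ : ℝ) < d / a + 1 := Nat.ceil_lt_add_one (div_pos hd ha).le
  have hda : min d a * (d / a) ≤ d := by
    rw [mul_div_assoc', div_le_iff₀ ha, mul_comm d a]
    exact mul_le_mul_of_nonneg_right (min_le_right d a) hd.le
  rw [mul_div_assoc', le_div_iff₀ hk]
  nlinarith [min_le_left d a, le_min hd.le ha.le]

theorem tendsto_div_natCeil_div_atTop {ι : Type*} {l : Filter ι} {d a : ι → ℝ}
    (hd₀ : ∀ i, 0 < d i) (ha₀ : ∀ i, 0 < a i) (hd : Tendsto d l atTop) (ha : Tendsto a l atTop) :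
    Tendsto (fun i => d i / ⌈d i / a i⌉₊) l atTop := by
  refine tendsto_atTop_mono (fun i => ?_) ((tendsto_inf_atTop l hd ha).atTop_div_const two_pos)
  rw [div_le_iff₀' two_pos]
  exact min_le_two_mul_div_natCeil_div (hd₀ i) (ha₀ i)

theorem stmt3 (q : ℕ → ℝ) (hmono : StrictMono q) (hpos : ∀ n, 0 < q n)
    (hgap : Tendsto (fun n => q (n + 1) - q n) atTop atTop)
    (ε : ℝ) (hε : 0 < ε) :
    ∃ qt : ℕ → ℝ, StrictMono qt ∧ (∀ n, 0 < qt n) ∧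
      (∀ n, qt (n + 1) ≤ (1 + ε) * qt n) ∧
      Tendsto (fun n => qt (n + 1) - qt n) atTop atTop ∧
      ∃ φ : ℕ → ℕ, StrictMono φ ∧ ∀ n, q n = qt (φ n) := by
  set D := fun n => q (n + 1) - q n
  have hD : ∀ n, 0 < D n := fun n => sub_pos.2 (hmono n.lt_succ_self)
  have hεq : ∀ n, 0 < ε * q n := fun n => mul_pos hε (hpos n)
  set k : ℕ → ℕ := fun n => ⌈D n / (ε * q n)⌉₊
  set φ : ℕ → ℕ := fun n => ∑ i ∈ range n, k i
  have hφ : StrictMono φ := strictMono_nat_of_lt_succ fun n => by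
    rw [show φ (n + 1) = φ n + k n from sum_range_succ k n]
    exact Nat.lt_add_of_pos_right (Nat.ceil_pos.2 (div_pos (hD n) (hεq n)))
  have h0 : φ 0 = 0 := sum_range_zero k
  have hstep : ∀ n, nodeStep q φ n = D n / k n := fun n => by
    simp [nodeStep, φ, D, sum_range_succ]
  have hqtop : Tendsto q atTop atTop :=
    (tendsto_add_atTop_iff_nat 1).1 <| tendsto_atTop_mono (fun n => by linarith [hpos n]) hgap
  have hstep_top : Tendsto (nodeStep q φ) atTop atTop :=
    (tendsto_congr hstep).2 (tendsto_div_natCeil_div_atTop hD hεq hgap (hqtop.const_mul_atTop hε))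
  have hle (m : ℕ) := le_interpolate hmono.monotone hφ.monotone h0 m
  refine ⟨interpolate q φ, interpolate_strictMono hmono hφ h0,
    fun m => (hpos _).trans_le (hle m), fun m => ?_, ?_, φ, hφ,
    fun n => (interpolate_apply hφ n).symm⟩
  · rw [interpolate_succ hφ h0, hstep]
    have := div_natCeil_div_le (hD (blockIndex φ m)) (hεq (blockIndex φ m))
    linarith [mul_le_mul_of_nonneg_left (hle m) hε.le]
  · refine (tendsto_congr fun m => ?_).2 (hstep_top.comp (tendsto_blockIndex_atTop hφ))
    rw [interpolate_succ hφ h0, add_sub_cancel_left, Function.comp_apply]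
end

section
/- Let E₁ ⊇ E₂ ⊇ ⋯ be a decreasing sequence of subsets of ℝ, each a finite union of disjoint closed intervals, such that each interval of E_{n-1} contains at least m_n ≥ 2 intervals of E_n separated by gaps of at least γ_n, where (γ_n) is a strictly decreasing positive sequence. Then the Hausdorff dimension of E = ⋂_n E_n is at least liminf_{n→∞} (log(m₁ ⋯ m_{n-1}) / (-log(m_n γ_n))). -/
/-!
Keep inside `C` only a subfamily in which every interval of generation `n` has exactly
`m (n + 1)` children. The mass of a set `V` at generation `M` is the proportion of the
`m 1 ⋯ m M` intervals of generation `M` that `V` meets; it decreases with `M`. If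
`γ (k + 1) ≤ diam V < γ k`, then `V` meets at most `min (2 diam V / γ (k + 1)) (m (k + 1))`
intervals of generation `k + 1`, and since `min a b ≤ a ^ s b ^ (1 - s)` its mass is at most
`2 (diam V) ^ s` as soon as `m 1 ⋯ m k (m (k + 1) γ (k + 1)) ^ s ≥ 1`, which holds for all large
`k` when `0 < s` is below the liminf. The masses of a finite cover of the limit set add up to at
least `1`, so `∑ (diam V) ^ s ≥ 1/4` for every such cover, and compactness turns this into
`μH[s] > 0`. Finally the liminf is at most `1`, because the `m 1 ⋯ m (k + 1)` intervals of
generation `k + 1` are `γ (k + 1)`-separated inside a single interval.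
-/

open Filter MeasureTheory Finset Topology Metric
open scoped ENNReal NNReal Classical

theorem Real.min_le_rpow_mul_rpow {a b s : ℝ} (ha : 0 ≤ a) (hb : 0 ≤ b) (hs0 : 0 ≤ s)
    (hs1 : s ≤ 1) : min a b ≤ a ^ s * b ^ (1 - s) := by
  have hmin : 0 ≤ min a b := le_min ha hb
  calc min a b = min a b ^ s * min a b ^ (1 - s) := by
        rw [← Real.rpow_add' hmin (by norm_num), add_sub_cancel, Real.rpow_one]
    _ ≤ a ^ s * b ^ (1 - s) := by
        gcongr
        · exact min_le_left a b
        · exact min_le_right a b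

theorem Real.one_le_mul_rpow_of_lt_log_div {P q s : ℝ} (hP : 1 ≤ P) (hq : 0 < q) (hs : 0 < s)
    (h : s < Real.log P / -Real.log q) : 1 ≤ P * q ^ s := by
  have hlogP : 0 ≤ Real.log P := Real.log_nonneg hP
  have hlogq : 0 < -Real.log q := by
    by_contra! hle
    exact (hs.trans h).not_ge (div_nonpos_of_nonneg_of_nonpos hlogP hle)
  rw [lt_div_iff₀ hlogq] at h
  rw [← Real.log_nonneg_iff (by positivity), Real.log_mul (by positivity) (by positivity),
    Real.log_rpow hq]
  linarith

theorem not_eventually_one_le_mul_rpow {P q : ℕ → ℝ} {c σ : ℝ} (hP : Tendsto P atTop atTop)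
    (hq : ∀ k, 0 < q k) (hPq : ∀ k, P k * q k ≤ c) (hσ : 1 < σ) :
    ¬ ∀ᶠ k in atTop, 1 ≤ P k * q k ^ σ := by
  intro h
  obtain ⟨k, hk, hPk, hlarge⟩ := (h.and ((hP.eventually_gt_atTop 0).and
    (((tendsto_rpow_atTop (sub_pos.2 hσ)).comp hP).eventually_gt_atTop (c ^ σ)))).exists
  have hc : 0 ≤ c := (mul_pos hPk (hq k)).le.trans (hPq k)
  have hqc : q k ≤ c / P k := by rw [le_div_iff₀ hPk, mul_comm]; exact hPq k
  have : P k ^ (σ - 1) ≤ c ^ σ := by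
    calc P k ^ (σ - 1) ≤ P k ^ (σ - 1) * (P k * q k ^ σ) :=
          le_mul_of_one_le_right (by positivity) hk
      _ ≤ P k ^ (σ - 1) * (P k * (c / P k) ^ σ) := by gcongr; exact (hq k).le
      _ = c ^ σ := by
        rw [Real.div_rpow hc hPk.le, Real.rpow_sub hPk, Real.rpow_one]
        field_simp
  exact this.not_gt hlarge

theorem Nat.exists_succ_le_lt {α : Type*} [LinearOrder α] {u : ℕ → α} {a : α} {j M : ℕ}
    (hjM : j ≤ M) (hM : u M ≤ a) (hj : a < u j) :
    ∃ k, j ≤ k ∧ k < M ∧ u (k + 1) ≤ a ∧ a < u k := by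
  induction M, hjM using Nat.le_induction with
  | base => exact absurd hj hM.not_gt
  | succ M hjM ih =>
    rcases le_or_gt (u M) a with h | h
    · obtain ⟨k, hjk, hkM, hk⟩ := ih h
      exact ⟨k, hjk, hkM.trans (Nat.lt_succ_self M), hk⟩
    · exact ⟨M, hjM, Nat.lt_succ_self M, hM, h⟩

theorem tendsto_prod_Ioc_atTop {m : ℕ → ℕ} (hm : ∀ n, 2 ≤ m n) :
    Tendsto (fun n => ∏ i ∈ Ioc 0 n, (m i : ℝ)) atTop atTop := by
  refine tendsto_atTop_mono (fun n => ?_) (tendsto_pow_atTop_atTop_of_one_lt one_lt_two)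
  calc (2 : ℝ) ^ n = ∏ _i ∈ Ioc 0 n, (2 : ℝ) := by rw [prod_const, Nat.card_Ioc, Nat.sub_zero]
    _ ≤ ∏ i ∈ Ioc 0 n, (m i : ℝ) :=
        prod_le_prod (fun _ _ => zero_le_two) fun i _ => by exact_mod_cast hm i

theorem isBoundedUnder_ge_of_liminf_ne_zero {α : Type*} {f : Filter α} {u : α → ℝ}
    (h : liminf u f ≠ 0) : f.IsBoundedUnder (· ≥ ·) u := by
  by_contra hu
  refine h ?_
  have hempty : {a | ∀ᶠ n in f, a ≤ u n} = ∅ :=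
    Set.eq_empty_of_forall_notMem fun a ha => hu ⟨a, ha⟩
  rw [liminf_eq, hempty, Real.sSup_empty]

theorem ENNReal.ofReal_le_of_forall_pos_lt {L : ℝ} {d : ℝ≥0∞}
    (h : ∀ s : ℝ, 0 < s → s < L → ENNReal.ofReal s ≤ d) : ENNReal.ofReal L ≤ d := by
  refine le_of_forall_lt_imp_le_of_dense fun r hr => ?_
  lift r to ℝ≥0 using hr.ne_top
  rcases eq_zero_or_pos r with rfl | hr0
  · exact zero_le
  simpa using h r hr0 (ENNReal.toReal_lt_of_lt_ofReal hr)

theorem Set.exists_finset_subset_card_eq {α : Type*} {s : Set α} {k : ℕ} (hk : 0 < k)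
    (h : k ≤ s.ncard) : ∃ u : Finset α, ↑u ⊆ s ∧ #u = k := by
  have hfin := Set.finite_of_ncard_pos (hk.trans_le h)
  obtain ⟨u, hu, hcard⟩ :=
    Finset.exists_subset_card_eq (h.trans_eq (Set.ncard_eq_toFinset_card _ hfin))
  exact ⟨u, fun x hx => hfin.mem_toFinset.1 (hu hx), hcard⟩

theorem card_le_div_add_one_of_separated {P : Finset ℝ} {γ D : ℝ} (hγ : 0 < γ) (hD : 0 ≤ D)
    (hsep : ∀ x ∈ P, ∀ y ∈ P, x ≠ y → γ ≤ |x - y|) (hdiam : ∀ x ∈ P, ∀ y ∈ P, |x - y| ≤ D) :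
    (#P : ℝ) ≤ D / γ + 1 := by
  rcases P.eq_empty_or_nonempty with rfl | hP
  · simp only [card_empty, CharP.cast_eq_zero]; positivity
  set a := P.min' hP
  have hmaps : Set.MapsTo (fun x => ⌊(x - a) / γ⌋₊) P (range (⌊D / γ⌋₊ + 1)) := by
    intro x hx
    refine mem_range_succ_iff.2 (Nat.floor_le_floor (div_le_div_of_nonneg_right ?_ hγ.le))
    exact (le_abs_self _).trans (hdiam x hx a (P.min'_mem hP))
  have hinj : Set.InjOn (fun x => ⌊(x - a) / γ⌋₊) P := by
    intro x hx y hy hxy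
    by_contra hne
    have hx0 : 0 ≤ (x - a) / γ := div_nonneg (sub_nonneg.2 (P.min'_le x hx)) hγ.le
    have hy0 : 0 ≤ (y - a) / γ := div_nonneg (sub_nonneg.2 (P.min'_le y hy)) hγ.le
    have hlt : |(x - a) / γ - (y - a) / γ| < 1 := Int.abs_sub_lt_one_of_floor_eq_floor <| by
      rw [← Int.natCast_floor_eq_floor hx0, ← Int.natCast_floor_eq_floor hy0]
      exact congrArg Nat.cast hxy
    rw [div_sub_div_same, sub_sub_sub_cancel_right, abs_div, abs_of_pos hγ, div_lt_one hγ] at hlt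
    exact (hsep x hx y hy hne).not_gt hlt
  calc (#P : ℝ) ≤ ⌊D / γ⌋₊ + 1 := by
        exact_mod_cast (card_le_card_of_injOn _ hmaps hinj).trans (card_range _).le
    _ ≤ D / γ + 1 := by gcongr; exact Nat.floor_le (by positivity)

theorem card_le_div_add_one_of_separated_of_inter_nonempty {A : Finset (Set ℝ)} {U : Set ℝ}
    {γ D : ℝ} (hγ : 0 < γ) (hD : 0 ≤ D)
    (hsep : ∀ I ∈ A, ∀ J ∈ A, I ≠ J → ∀ x ∈ I, ∀ y ∈ J, γ ≤ |x - y|)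
    (hU : ∀ x ∈ U, ∀ y ∈ U, |x - y| ≤ D) (hmeet : ∀ I ∈ A, (I ∩ U).Nonempty) :
    (#A : ℝ) ≤ D / γ + 1 := by
  choose! p hp using hmeet
  have hinj : Set.InjOn p A := by
    intro I hI J hJ hIJ
    by_contra hne
    have := hsep I hI J hJ hne _ (hp I hI).1 _ (hp J hJ).1
    rw [hIJ, sub_self, abs_zero] at this
    exact this.not_gt hγ
  rw [← card_image_of_injOn hinj]
  refine card_le_div_add_one_of_separated hγ hD ?_ ?_
  · simp only [mem_image]
    rintro _ ⟨I, hI, rfl⟩ _ ⟨J, hJ, rfl⟩ hne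
    exact hsep I hI J hJ (fun h => hne (h ▸ rfl)) _ (hp I hI).1 _ (hp J hJ).1
  · simp only [mem_image]
    rintro _ ⟨I, hI, rfl⟩ _ ⟨J, hJ, rfl⟩
    exact hU _ (hp I hI).2 _ (hp J hJ).2

theorem exists_pos_ediam_thickening_rpow_le {X : Type*} [PseudoEMetricSpace X] {t : Set X}
    (ht : ediam t ≠ ⊤) {s : ℝ} (hs : 0 < s) {η : ℝ≥0∞} (hη : η ≠ 0) {ρ : ℝ≥0}
    (hρ : 0 < ρ) : ∃ ε : ℝ≥0, 0 < ε ∧ ε ≤ ρ ∧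
      ediam (thickening ε t) ^ s ≤ (⨆ _ : t.Nonempty, ediam t ^ s) + η := by
  rcases t.eq_empty_or_nonempty with rfl | hne
  · refine ⟨ρ, hρ, le_rfl, ?_⟩
    simp [ediam_empty, ENNReal.zero_rpow_of_pos hs]
  rw [iSup_pos hne]
  have hlim : Tendsto (fun ε : ℝ≥0 => (ediam t + 2 * (ε : ℝ≥0∞)) ^ s) (𝓝[>] 0)
      (𝓝 (ediam t ^ s)) := by
    have : Continuous fun ε : ℝ≥0 => (ediam t + 2 * (ε : ℝ≥0∞)) ^ s :=
      ENNReal.continuous_rpow_const.comp (continuous_const.add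
        ((ENNReal.continuous_const_mul ENNReal.ofNat_ne_top).comp ENNReal.continuous_coe))
    simpa using (this.tendsto 0).mono_left nhdsWithin_le_nhds
  have hlt : ediam t ^ s < ediam t ^ s + η :=
    ENNReal.lt_add_right (ENNReal.rpow_ne_top_of_nonneg hs.le ht) hη
  obtain ⟨ε, hε, hερ⟩ := ((hlim.eventually (gt_mem_nhds hlt)).and (Ioc_mem_nhdsGT hρ)).exists
  exact ⟨ε, hερ.1, hερ.2, (ENNReal.rpow_le_rpow (ediam_thickening_le ε) hs.le).trans hε.le⟩

theorem le_hausdorffMeasure_of_forall_finite_cover {X : Type*} [EMetricSpace X]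
    [MeasurableSpace X] [BorelSpace X] {E : Set X} (hE : IsCompact E) {s : ℝ} (hs : 0 < s)
    {c : ℝ≥0∞} {δ : ℝ≥0} (hδ : 0 < δ)
    (h : ∀ (F : Finset ℕ) (V : ℕ → Set X), (∀ n ∈ F, ediam (V n) ≤ δ) →
      E ⊆ ⋃ n ∈ F, V n → c ≤ ∑ n ∈ F, ediam (V n) ^ s) :
    c ≤ μH[s] E := by
  -- Thicken the sets of a `δ / 2`-cover into open sets, losing at most `η` in the `s`-sum, and
  -- pass to a finite subcover of `E`.
  rw [Measure.hausdorffMeasure_apply]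
  refine le_iSup₂_of_le ((δ / 2 : ℝ≥0) : ℝ≥0∞) (by simpa using hδ.ne') ?_
  refine le_iInf₂ fun t hcover => le_iInf fun ht =>
    ENNReal.le_of_forall_pos_le_add fun η hη _ => ?_
  obtain ⟨η', hη'pos, hη'⟩ :=
    ENNReal.exists_pos_sum_of_countable (ENNReal.coe_ne_zero.2 hη.ne') ℕ
  have hρ : 0 < δ / 4 := by positivity
  choose ε hεpos hεδ hε using fun n => exists_pos_ediam_thickening_rpow_le
    ((ht n).trans_lt ENNReal.coe_lt_top).ne hs (ENNReal.coe_ne_zero.2 (hη'pos n).ne') hρ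
  obtain ⟨F, hF⟩ := hE.elim_finite_subcover (fun n => thickening (ε n) (t n))
    (fun n => isOpen_thickening) (hcover.trans <| Set.iUnion_mono fun n =>
      self_subset_thickening (NNReal.coe_pos.2 (hεpos n)) _)
  have hdiam : ∀ n ∈ F, ediam (thickening (ε n) (t n)) ≤ δ := by
    intro n _
    calc ediam (thickening (ε n) (t n)) ≤ ediam (t n) + 2 * ε n := ediam_thickening_le _
      _ ≤ ((δ / 2 : ℝ≥0) : ℝ≥0∞) + 2 * ((δ / 4 : ℝ≥0) : ℝ≥0∞) := by
          gcongr; exacts [ht n, hεδ n]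
      _ = δ := by rw [← ENNReal.coe_ofNat, ← ENNReal.coe_mul, ← ENNReal.coe_add]; congr 1; ring
  calc c ≤ ∑ n ∈ F, ediam (thickening (ε n) (t n)) ^ s := h F _ hdiam hF
    _ ≤ ∑ n ∈ F, ((⨆ _ : (t n).Nonempty, ediam (t n) ^ s) + η' n) :=
        sum_le_sum fun n _ => hε n
    _ ≤ ∑' n, ((⨆ _ : (t n).Nonempty, ediam (t n) ^ s) + η' n) := ENNReal.sum_le_tsum F
    _ ≤ (∑' n, ⨆ _ : (t n).Nonempty, ediam (t n) ^ s) + η := by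
        rw [ENNReal.tsum_add]; gcongr

structure CantorScheme (m : ℕ → ℕ) (γ : ℕ → ℝ) where
  level : ℕ → Finset (Set ℝ)
  root : Set ℝ
  level_zero : level 0 = {root}
  isCompact : ∀ n, ∀ I ∈ level n, IsCompact I
  nonempty : ∀ n, ∀ I ∈ level n, I.Nonempty
  exists_parent : ∀ n, ∀ J ∈ level (n + 1), ∃ I ∈ level n, J ⊆ I
  gap : ∀ n, ∀ I ∈ level n, ∀ J ∈ level n, I ≠ J → ∀ x ∈ I, ∀ y ∈ J, γ n ≤ |x - y|
  card_children : ∀ n, ∀ I ∈ level n, #{J ∈ level (n + 1) | J ⊆ I} = m (n + 1)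

namespace CantorScheme

variable {m : ℕ → ℕ} {γ : ℕ → ℝ} (S : CantorScheme m γ)

def limit : Set ℝ := ⋂ n, ⋃₀ (S.level n : Set (Set ℝ))

theorem exists_ancestor {k M : ℕ} (hk : k ≤ M) {K : Set ℝ} (hK : K ∈ S.level M) :
    ∃ I ∈ S.level k, K ⊆ I := by
  induction M, hk using Nat.le_induction generalizing K with
  | base => exact ⟨K, hK, subset_rfl⟩
  | succ j _ ih =>
    obtain ⟨J, hJ, hKJ⟩ := S.exists_parent j K hK
    obtain ⟨I, hI, hJI⟩ := ih hJ
    exact ⟨I, hI, hKJ.trans hJI⟩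

theorem root_mem_level_zero : S.root ∈ S.level 0 := by
  rw [S.level_zero]; exact mem_singleton_self _

theorem subset_root {n : ℕ} {K : Set ℝ} (hK : K ∈ S.level n) : K ⊆ S.root := by
  obtain ⟨I, hI, hKI⟩ := S.exists_ancestor (Nat.zero_le n) hK
  rw [S.level_zero, mem_singleton] at hI
  exact hI ▸ hKI

theorem eq_of_inter_nonempty (hγ : ∀ n, 0 < γ n) {n : ℕ} {I J : Set ℝ} (hI : I ∈ S.level n)
    (hJ : J ∈ S.level n) (h : (I ∩ J).Nonempty) : I = J := by
  by_contra hne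
  obtain ⟨x, hxI, hxJ⟩ := h
  have := S.gap n I hI J hJ hne x hxI x hxJ
  rw [sub_self, abs_zero] at this
  exact this.not_gt (hγ n)

theorem card_descendants (hγ : ∀ n, 0 < γ n) {k M : ℕ} (hkM : k ≤ M) {I : Set ℝ}
    (hI : I ∈ S.level k) : #{K ∈ S.level M | K ⊆ I} = ∏ i ∈ Ioc k M, m i := by
  induction M, hkM using Nat.le_induction with
  | base =>
    suffices {K ∈ S.level k | K ⊆ I} = {I} by simp [this]
    ext K
    simp only [mem_filter, mem_singleton]
    refine ⟨fun ⟨hK, hKI⟩ => ?_, by rintro rfl; exact ⟨hI, subset_rfl⟩⟩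
    obtain ⟨x, hx⟩ := S.nonempty k K hK
    exact S.eq_of_inter_nonempty hγ hK hI ⟨x, hx, hKI hx⟩
  | succ M hkM ih =>
    have hsplit : {K ∈ S.level (M + 1) | K ⊆ I} =
        {J ∈ S.level M | J ⊆ I}.biUnion fun J => {K ∈ S.level (M + 1) | K ⊆ J} := by
      ext K
      simp only [mem_filter, mem_biUnion]
      constructor
      · rintro ⟨hK, hKI⟩
        obtain ⟨J, hJ, hKJ⟩ := S.exists_parent M K hK
        obtain ⟨I', hI', hJI'⟩ := S.exists_ancestor hkM hJ
        obtain ⟨x, hx⟩ := S.nonempty _ K hK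
        obtain rfl := S.eq_of_inter_nonempty hγ hI hI' ⟨x, hKI hx, hJI' (hKJ hx)⟩
        exact ⟨J, ⟨hJ, hJI'⟩, hK, hKJ⟩
      · rintro ⟨J, ⟨-, hJI⟩, hK, hKJ⟩
        exact ⟨hK, hKJ.trans hJI⟩
    rw [hsplit, card_biUnion, sum_congr rfl fun J hJ => S.card_children M J (mem_filter.1 hJ).1,
      sum_const, smul_eq_mul, ih, prod_Ioc_succ_top hkM]
    intro J hJ J' hJ' hne
    refine disjoint_left.2 fun K hK hK' => hne ?_
    obtain ⟨x, hx⟩ := S.nonempty _ K (mem_filter.1 hK).1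
    exact S.eq_of_inter_nonempty hγ (mem_filter.1 hJ).1 (mem_filter.1 hJ').1
      ⟨x, (mem_filter.1 hK).2 hx, (mem_filter.1 hK').2 hx⟩

theorem card_level (hγ : ∀ n, 0 < γ n) (n : ℕ) : #(S.level n) = ∏ i ∈ Ioc 0 n, m i := by
  rw [← S.card_descendants hγ (Nat.zero_le n) S.root_mem_level_zero,
    filter_true_of_mem fun K => S.subset_root]

theorem sUnion_level_antitone : Antitone fun n => ⋃₀ (S.level n : Set (Set ℝ)) := by
  refine antitone_nat_of_succ_le fun n => Set.sUnion_subset fun J hJ => ?_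
  obtain ⟨I, hI, hJI⟩ := S.exists_parent n J hJ
  exact hJI.trans (Set.subset_sUnion_of_mem hI)

theorem isClosed_sUnion_level (n : ℕ) : IsClosed (⋃₀ (S.level n : Set (Set ℝ))) := by
  rw [Set.sUnion_eq_biUnion]
  exact (S.level n).finite_toSet.isClosed_biUnion fun I hI => (S.isCompact n I hI).isClosed

theorem isCompact_limit : IsCompact S.limit := by
  refine (S.isCompact 0 S.root S.root_mem_level_zero).of_isClosed_subset
    (isClosed_iInter S.isClosed_sUnion_level) ?_
  exact (Set.iInter_subset _ 0).trans (Set.sUnion_subset fun K hK => S.subset_root hK)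

theorem exists_descendant (hm : ∀ n, 0 < m n) {k M : ℕ} (hkM : k ≤ M) {I : Set ℝ}
    (hI : I ∈ S.level k) : ∃ K ∈ S.level M, K ⊆ I := by
  induction M, hkM using Nat.le_induction with
  | base => exact ⟨I, hI, subset_rfl⟩
  | succ M _ ih =>
    obtain ⟨J, hJ, hJI⟩ := ih
    obtain ⟨K, hK⟩ := card_pos.1 ((hm (M + 1)).trans_eq (S.card_children M J hJ).symm)
    exact ⟨K, (mem_filter.1 hK).1, (mem_filter.1 hK).2.trans hJI⟩

theorem inter_limit_nonempty (hm : ∀ n, 0 < m n) {k : ℕ} {I : Set ℝ} (hI : I ∈ S.level k) :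
    (I ∩ S.limit).Nonempty := by
  obtain ⟨x, hx⟩ := IsCompact.nonempty_iInter_of_sequence_nonempty_isCompact_isClosed
    (fun j => I ∩ ⋃₀ (S.level (k + j) : Set (Set ℝ)))
    (fun j => Set.inter_subset_inter_right _ (S.sUnion_level_antitone (Nat.le_succ _)))
    (fun j => by
      obtain ⟨K, hK, hKI⟩ := S.exists_descendant hm (Nat.le_add_right k j) hI
      obtain ⟨x, hx⟩ := S.nonempty _ K hK
      exact ⟨x, hKI hx, K, hK, hx⟩)
    ((S.isCompact k I hI).inter_right (S.isClosed_sUnion_level _))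
    (fun j => (S.isCompact k I hI).isClosed.inter (S.isClosed_sUnion_level _))
  simp only [Set.mem_iInter, Set.mem_inter_iff] at hx
  exact ⟨x, (hx 0).1, Set.mem_iInter.2 fun j =>
    S.sUnion_level_antitone (Nat.le_add_left j k) (hx j).2⟩

theorem card_filter_inter_nonempty_le_one {V : Set ℝ} {D : ℝ}
    (hV : ∀ x ∈ V, ∀ y ∈ V, |x - y| ≤ D) {k : ℕ} (hD : D < γ k) :
    #{I ∈ S.level k | (I ∩ V).Nonempty} ≤ 1 := by
  refine card_le_one.2 fun I hI J hJ => ?_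
  obtain ⟨hI, x, hxI, hxV⟩ := mem_filter.1 hI
  obtain ⟨hJ, y, hyJ, hyV⟩ := mem_filter.1 hJ
  by_contra hne
  exact (S.gap k I hI J hJ hne x hxI y hyJ |>.trans (hV x hxV y hyV)).not_gt hD

theorem card_filter_inter_nonempty_le_mul (hγ : ∀ n, 0 < γ n) {k M : ℕ} (hkM : k ≤ M)
    (V : Set ℝ) :
    #{K ∈ S.level M | (K ∩ V).Nonempty} ≤
      #{I ∈ S.level k | (I ∩ V).Nonempty} * ∏ i ∈ Ioc k M, m i := by
  calc #{K ∈ S.level M | (K ∩ V).Nonempty}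
      ≤ #({I ∈ S.level k | (I ∩ V).Nonempty}.biUnion fun I => {K ∈ S.level M | K ⊆ I}) := by
        refine card_le_card fun K hK => ?_
        obtain ⟨hK, x, hxK, hxV⟩ := mem_filter.1 hK
        obtain ⟨I, hI, hKI⟩ := S.exists_ancestor hkM hK
        exact mem_biUnion.2 ⟨I, mem_filter.2 ⟨hI, x, hKI hxK, hxV⟩, mem_filter.2 ⟨hK, hKI⟩⟩
    _ ≤ ∑ I ∈ {I ∈ S.level k | (I ∩ V).Nonempty}, #{K ∈ S.level M | K ⊆ I} := card_biUnion_le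
    _ = #{I ∈ S.level k | (I ∩ V).Nonempty} * ∏ i ∈ Ioc k M, m i := by
        rw [sum_congr rfl fun _ hI => S.card_descendants hγ hkM (mem_filter.1 hI).1, sum_const,
          smul_eq_mul]

theorem card_filter_inter_nonempty_le_div_add_one (hγ : ∀ n, 0 < γ n) {V : Set ℝ} {D : ℝ}
    (hD : 0 ≤ D) (hV : ∀ x ∈ V, ∀ y ∈ V, |x - y| ≤ D) (k : ℕ) :
    (#{I ∈ S.level k | (I ∩ V).Nonempty} : ℝ) ≤ D / γ k + 1 :=
  card_le_div_add_one_of_separated_of_inter_nonempty (hγ k) hD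
    (fun I hI J hJ => S.gap k I (mem_filter.1 hI).1 J (mem_filter.1 hJ).1) hV
    fun _ hI => (mem_filter.1 hI).2

theorem prod_mul_le_two_mul_diam (hm : ∀ n, 2 ≤ m n) (hγ : ∀ n, 0 < γ n) (k : ℕ) :
    (∏ i ∈ Ioc 0 k, (m i : ℝ)) * ((m (k + 1) : ℝ) * γ (k + 1)) ≤ 2 * diam S.root := by
  have hbdd := (S.isCompact 0 S.root S.root_mem_level_zero).isBounded
  have hpack := card_le_div_add_one_of_separated_of_inter_nonempty (hγ (k + 1)) diam_nonneg
    (S.gap (k + 1))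
    (fun x hx y hy => by rw [← Real.dist_eq]; exact dist_le_diam_of_mem hbdd hx hy)
    fun K hK => by
      obtain ⟨x, hx⟩ := S.nonempty _ K hK
      exact ⟨x, hx, S.subset_root hK hx⟩
  rw [S.card_level hγ, Nat.cast_prod, prod_Ioc_succ_top (Nat.zero_le k)] at hpack
  have h2 : (2 : ℝ) ≤ (∏ i ∈ Ioc 0 k, (m i : ℝ)) * m (k + 1) := by
    have h1 : (1 : ℝ) ≤ ∏ i ∈ Ioc 0 k, (m i : ℝ) :=
      one_le_prod fun i _ => by exact_mod_cast (one_le_two.trans (hm i))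
    have h2 : (2 : ℝ) ≤ m (k + 1) := by exact_mod_cast hm (k + 1)
    nlinarith
  have hg := hγ (k + 1)
  have hpack' := mul_le_mul_of_nonneg_right hpack hg.le
  rw [add_mul, div_mul_cancel₀ _ hg.ne', one_mul] at hpack'
  nlinarith

noncomputable def mass (M : ℕ) (V : Set ℝ) : ℝ :=
  #{K ∈ S.level M | (K ∩ V).Nonempty} / ∏ i ∈ Ioc 0 M, (m i : ℝ)

theorem one_le_sum_mass (hm : ∀ n, 0 < m n) (hγ : ∀ n, 0 < γ n) {ι : Type*} {F : Finset ι}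
    {V : ι → Set ℝ} (hcover : S.limit ⊆ ⋃ n ∈ F, V n) (M : ℕ) :
    1 ≤ ∑ n ∈ F, S.mass M (V n) := by
  have hP : (0 : ℝ) < ∏ i ∈ Ioc 0 M, (m i : ℝ) := prod_pos fun i _ => Nat.cast_pos.2 (hm i)
  have hcard : #(S.level M) ≤ ∑ n ∈ F, #{K ∈ S.level M | (K ∩ V n).Nonempty} := by
    refine (card_le_card fun K hK => ?_).trans card_biUnion_le
    obtain ⟨x, hxK, hxE⟩ := S.inter_limit_nonempty hm hK
    obtain ⟨n, hn, hxV⟩ := Set.mem_iUnion₂.1 (hcover hxE)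
    exact mem_biUnion.2 ⟨n, hn, mem_filter.2 ⟨hK, x, hxK, hxV⟩⟩
  rw [S.card_level hγ] at hcard
  simp only [mass, ← sum_div, le_div_iff₀ hP, one_mul]
  exact_mod_cast hcard

theorem mass_le_inv_prod {V : Set ℝ} {D : ℝ} (hV : ∀ x ∈ V, ∀ y ∈ V, |x - y| ≤ D) {M : ℕ}
    (hD : D < γ M) : S.mass M V ≤ 1 / ∏ i ∈ Ioc 0 M, (m i : ℝ) := by
  unfold mass
  gcongr
  exact_mod_cast S.card_filter_inter_nonempty_le_one hV hD

theorem mass_le_mass (hm : ∀ n, 0 < m n) (hγ : ∀ n, 0 < γ n) {k M : ℕ} (hkM : k ≤ M)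
    (V : Set ℝ) : S.mass M V ≤ S.mass k V := by
  have hcount : (#{K ∈ S.level M | (K ∩ V).Nonempty} : ℝ) ≤
      #{I ∈ S.level k | (I ∩ V).Nonempty} * ∏ i ∈ Ioc k M, (m i : ℝ) := by
    exact_mod_cast S.card_filter_inter_nonempty_le_mul hγ hkM V
  have hP : (0 : ℝ) < ∏ i ∈ Ioc 0 k, (m i : ℝ) := prod_pos fun i _ => Nat.cast_pos.2 (hm i)
  have hQ : (0 : ℝ) < ∏ i ∈ Ioc k M, (m i : ℝ) := prod_pos fun i _ => Nat.cast_pos.2 (hm i)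
  rw [mass, mass, ← prod_Ioc_consecutive _ (Nat.zero_le k) hkM, div_le_div_iff₀ (by positivity) hP]
  calc _ ≤ (#{I ∈ S.level k | (I ∩ V).Nonempty} * ∏ i ∈ Ioc k M, (m i : ℝ)) *
        ∏ i ∈ Ioc 0 k, (m i : ℝ) := by gcongr
    _ = _ := by ring

theorem card_filter_inter_nonempty_succ_le_min (hγ : ∀ n, 0 < γ n) {V : Set ℝ} {D : ℝ}
    (hV : ∀ x ∈ V, ∀ y ∈ V, |x - y| ≤ D) {k : ℕ} (hDk : γ (k + 1) ≤ D) (hD : D < γ k) :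
    (#{I ∈ S.level (k + 1) | (I ∩ V).Nonempty} : ℝ) ≤ min (2 * D / γ (k + 1)) (m (k + 1)) := by
  have hg := hγ (k + 1)
  refine le_min ?_ ?_
  · calc _ ≤ D / γ (k + 1) + 1 :=
          S.card_filter_inter_nonempty_le_div_add_one hγ (hg.le.trans hDk) hV (k + 1)
      _ ≤ 2 * D / γ (k + 1) := by
          rw [mul_div_assoc, two_mul, add_le_add_iff_left, one_le_div hg]; exact hDk
  · have := (S.card_filter_inter_nonempty_le_mul hγ (M := k + 1) k.le_succ V).trans
      (Nat.mul_le_mul_right _ (S.card_filter_inter_nonempty_le_one hV hD))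
    rw [prod_Ioc_succ_top le_rfl, Ioc_self, prod_empty, one_mul, one_mul] at this
    exact_mod_cast this

theorem mass_succ_le_rpow (hm : ∀ n, 0 < m n) (hγ : ∀ n, 0 < γ n) {s : ℝ} (hs0 : 0 ≤ s)
    (hs1 : s ≤ 1) {V : Set ℝ} {D : ℝ} (hV : ∀ x ∈ V, ∀ y ∈ V, |x - y| ≤ D) {k : ℕ}
    (hDk : γ (k + 1) ≤ D) (hD : D < γ k)
    (hkey : 1 ≤ (∏ i ∈ Ioc 0 k, (m i : ℝ)) * ((m (k + 1) : ℝ) * γ (k + 1)) ^ s) :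
    S.mass (k + 1) V ≤ 2 * D ^ s := by
  have hc := S.card_filter_inter_nonempty_succ_le_min hγ hV hDk hD
  rw [mass, prod_Ioc_succ_top (Nat.zero_le k)]
  set P := ∏ i ∈ Ioc 0 k, (m i : ℝ)
  set b : ℝ := (m (k + 1) : ℝ)
  set g := γ (k + 1)
  have hP : 0 < P := prod_pos fun i _ => Nat.cast_pos.2 (hm i)
  have hb : 0 < b := Nat.cast_pos.2 (hm _)
  have hg : 0 < g := hγ _
  have hD0 : 0 < D := hg.trans_le hDk
  calc _ ≤ (2 * D / g) ^ s * b ^ (1 - s) / (P * b) := by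
        gcongr
        exact hc.trans (Real.min_le_rpow_mul_rpow (by positivity) hb.le hs0 hs1)
    _ = 2 ^ s * D ^ s / (P * (b * g) ^ s) := by
        rw [Real.div_rpow (by positivity) hg.le, Real.mul_rpow zero_le_two hD0.le,
          Real.rpow_sub hb, Real.rpow_one, Real.mul_rpow hb.le hg.le]
        field_simp
    _ ≤ 2 ^ s * D ^ s := div_le_self (by positivity) hkey
    _ ≤ 2 * D ^ s := by
        gcongr
        exact Real.rpow_le_self_of_one_le one_le_two hs1

theorem quarter_le_sum_rpow (hm : ∀ n, 2 ≤ m n) (hγ : ∀ n, 0 < γ n) {s : ℝ} (hs0 : 0 ≤ s)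
    (hs1 : s ≤ 1) {N₀ : ℕ}
    (hkey : ∀ k, N₀ ≤ k → 1 ≤ (∏ i ∈ Ioc 0 k, (m i : ℝ)) * ((m (k + 1) : ℝ) * γ (k + 1)) ^ s)
    {ι : Type*} {F : Finset ι} {V : ι → Set ℝ} {D : ι → ℝ} (hD0 : ∀ n ∈ F, 0 ≤ D n)
    (hV : ∀ n ∈ F, ∀ x ∈ V n, ∀ y ∈ V n, |x - y| ≤ D n) (hD : ∀ n ∈ F, D n < γ N₀)
    (hcover : S.limit ⊆ ⋃ n ∈ F, V n) :
    1 / 4 ≤ ∑ n ∈ F, D n ^ s := by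
  have hm₀ : ∀ n, 0 < m n := fun n => zero_lt_two.trans_le (hm n)
  -- Sets of diameter `< γ M` meet at most one interval of generation `M`; `M` is chosen so deep
  -- that their total mass is at most `1 / 2`.
  obtain ⟨M, hMF, hNM⟩ := (((tendsto_prod_Ioc_atTop hm).eventually_ge_atTop (2 * #F)).and
    (eventually_ge_atTop N₀)).exists
  set P := ∏ i ∈ Ioc 0 M, (m i : ℝ)
  have hP : 0 < P := prod_pos fun i _ => Nat.cast_pos.2 (hm₀ i)
  have hmass : ∀ n ∈ F, S.mass M (V n) ≤ 1 / P + 2 * D n ^ s := by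
    intro n hn
    have hDs : 0 ≤ D n ^ s := Real.rpow_nonneg (hD0 n hn) s
    rcases lt_or_ge (D n) (γ M) with hsmall | hlarge
    · linarith [S.mass_le_inv_prod (hV n hn) hsmall]
    · obtain ⟨k, hNk, hkM, hk⟩ := Nat.exists_succ_le_lt hNM hlarge (hD n hn)
      have := (S.mass_le_mass hm₀ hγ hkM (V n)).trans
        (S.mass_succ_le_rpow hm₀ hγ hs0 hs1 (hV n hn) hk.1 hk.2 (hkey k hNk))
      have : 0 ≤ 1 / P := by positivity
      linarith
  have hFP : #F / P ≤ 1 / 2 := by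
    rw [div_le_iff₀ hP]; linarith
  calc (1 : ℝ) / 4 = (1 - 1 / 2) / 2 := by norm_num
    _ ≤ (∑ n ∈ F, S.mass M (V n) - #F / P) / 2 := by
        gcongr
        exact S.one_le_sum_mass hm₀ hγ hcover M
    _ ≤ ∑ n ∈ F, D n ^ s := by
        have := sum_le_sum hmass
        rw [sum_add_distrib, sum_const, nsmul_eq_mul, ← mul_sum, mul_one_div] at this
        linarith

theorem quarter_le_hausdorffMeasure_limit (hm : ∀ n, 2 ≤ m n) (hγ : ∀ n, 0 < γ n) {s : ℝ}
    (hs0 : 0 < s) (hs1 : s ≤ 1) {N₀ : ℕ}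
    (hkey : ∀ k, N₀ ≤ k → 1 ≤ (∏ i ∈ Ioc 0 k, (m i : ℝ)) * ((m (k + 1) : ℝ) * γ (k + 1)) ^ s) :
    ENNReal.ofReal (1 / 4) ≤ μH[s] S.limit := by
  refine le_hausdorffMeasure_of_forall_finite_cover S.isCompact_limit hs0
    (δ := (γ N₀ / 2).toNNReal) (by simpa using hγ N₀) fun F V hdiam hcover => ?_
  have hfin : ∀ n ∈ F, ediam (V n) ≠ ⊤ := fun n hn => ((hdiam n hn).trans_lt ENNReal.coe_lt_top).ne
  have hsum := S.quarter_le_sum_rpow hm hγ hs0.le hs1 hkey (D := fun n => (ediam (V n)).toReal)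
    (fun n _ => ENNReal.toReal_nonneg)
    (fun n hn x hx y hy => by
      rw [← Real.dist_eq, dist_edist]
      exact ENNReal.toReal_mono (hfin n hn) (edist_le_ediam_of_mem hx hy))
    (fun n hn => (ENNReal.toReal_le_of_le_ofReal (by linarith [hγ N₀]) (hdiam n hn)).trans_lt
      (by linarith [hγ N₀]))
    hcover
  calc ENNReal.ofReal (1 / 4) ≤ ENNReal.ofReal (∑ n ∈ F, (ediam (V n)).toReal ^ s) :=
        ENNReal.ofReal_le_ofReal hsum
    _ = ∑ n ∈ F, ediam (V n) ^ s := by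
        rw [ENNReal.ofReal_sum_of_nonneg fun n _ => Real.rpow_nonneg ENNReal.toReal_nonneg s]
        refine sum_congr rfl fun n hn => ?_
        rw [← ENNReal.ofReal_rpow_of_nonneg ENNReal.toReal_nonneg hs0.le,
          ENNReal.ofReal_toReal (hfin n hn)]

theorem le_dimH_limit (hm : ∀ n, 2 ≤ m n) (hγ : ∀ n, 0 < γ n) {s : ℝ} (hs0 : 0 < s)
    (hs1 : s ≤ 1) {N₀ : ℕ}
    (hkey : ∀ k, N₀ ≤ k → 1 ≤ (∏ i ∈ Ioc 0 k, (m i : ℝ)) * ((m (k + 1) : ℝ) * γ (k + 1)) ^ s) :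
    ENNReal.ofReal s ≤ dimH S.limit := by
  refine le_dimH_of_hausdorffMeasure_ne_zero (d := s.toNNReal) ?_
  rw [Real.coe_toNNReal s hs0.le]
  exact (lt_of_lt_of_le (by norm_num) (S.quarter_le_hausdorffMeasure_limit hm hγ hs0 hs1 hkey)).ne'

end CantorScheme

theorem exists_cantorScheme {m : ℕ → ℕ} {γ : ℕ → ℝ} (C : ℕ → Set (Set ℝ)) (hC₀ : (C 0).Nonempty)
    (hcompact : ∀ n, ∀ I ∈ C n, IsCompact I) (hnonempty : ∀ n, ∀ I ∈ C n, I.Nonempty)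
    (hm : ∀ n, 0 < m n) (hcount : ∀ n, ∀ I ∈ C n, m (n + 1) ≤ {J ∈ C (n + 1) | J ⊆ I}.ncard)
    (hγ : ∀ n, 0 < γ n)
    (hgap : ∀ n, ∀ I ∈ C n, ∀ J ∈ C n, I ≠ J → ∀ x ∈ I, ∀ y ∈ J, γ n ≤ |x - y|) :
    ∃ S : CantorScheme m γ, ∀ n, ↑(S.level n) ⊆ C n := by
  choose! child hchild hcard using fun n I hI =>
    Set.exists_finset_subset_card_eq (hm (n + 1)) (hcount n I hI)
  obtain ⟨I₀, hI₀⟩ := hC₀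
  let level : ℕ → Finset (Set ℝ) := fun n => Nat.rec {I₀} (fun n L => L.biUnion (child n)) n
  have hlevel_succ : ∀ n, level (n + 1) = (level n).biUnion (child n) := fun n => rfl
  have hlevelC : ∀ n, ∀ I ∈ level n, I ∈ C n := by
    intro n
    induction n with
    | zero => simpa [level] using hI₀
    | succ n ih =>
      intro J hJ
      obtain ⟨I, hI, hJI⟩ := mem_biUnion.1 ((hlevel_succ n) ▸ hJ)
      exact (hchild n I (ih I hI) hJI).1
  refine ⟨⟨level, I₀, rfl, fun n I hI => hcompact n I (hlevelC n I hI),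
    fun n I hI => hnonempty n I (hlevelC n I hI), fun n J hJ => ?_,
    fun n I hI J hJ => hgap n I (hlevelC n I hI) J (hlevelC n J hJ), fun n I hI => ?_⟩, hlevelC⟩
  · obtain ⟨I, hI, hJI⟩ := mem_biUnion.1 ((hlevel_succ n) ▸ hJ)
    exact ⟨I, hI, (hchild n I (hlevelC n I hI) hJI).2⟩
  · rw [← hcard n I (hlevelC n I hI)]
    congr 1
    ext J
    simp only [mem_filter, hlevel_succ, mem_biUnion]
    constructor
    · rintro ⟨⟨I', hI', hJI'⟩, hJI⟩
      obtain ⟨x, hx⟩ := hnonempty _ J (hchild n I' (hlevelC n I' hI') hJI').1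
      by_contra hne
      have := hgap n I (hlevelC n I hI) I' (hlevelC n I' hI')
        (fun h => hne (h ▸ hJI')) x (hJI hx) x ((hchild n I' (hlevelC n I' hI') hJI').2 hx)
      rw [sub_self, abs_zero] at this
      exact this.not_gt (hγ n)
    · intro hJ
      exact ⟨⟨I, hI, hJ⟩, (hchild n I (hlevelC n I hI) hJ).2⟩

theorem stmt12_general (C : ℕ → Set (Set ℝ)) (m : ℕ → ℕ) (γ : ℕ → ℝ)
    (hne : ∀ n, (C n).Nonempty)
    (hIcc : ∀ n, ∀ I ∈ C n, ∃ a b : ℝ, a ≤ b ∧ I = Set.Icc a b)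
    (hm : ∀ n, 2 ≤ m n)
    (hcount : ∀ n, ∀ I ∈ C n, m (n + 1) ≤ {J ∈ C (n + 1) | J ⊆ I}.ncard)
    (hγpos : ∀ n, 0 < γ n)
    (hgap : ∀ n, ∀ I ∈ C n, ∀ J ∈ C n, I ≠ J → ∀ x ∈ I, ∀ y ∈ J, γ n ≤ |x - y|) :
    ENNReal.ofReal
        (liminf (fun n =>
            Real.log (∏ i ∈ Finset.Icc 1 n, (m i : ℝ)) /
              (-Real.log ((m (n + 1) : ℝ) * γ (n + 1)))) atTop) ≤
      dimH (⋂ n, ⋃₀ C n) := by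
  set L := liminf (fun n => Real.log (∏ i ∈ Finset.Icc 1 n, (m i : ℝ)) /
    (-Real.log ((m (n + 1) : ℝ) * γ (n + 1)))) atTop
  have hm₀ : ∀ n, 0 < m n := fun n => zero_lt_two.trans_le (hm n)
  obtain ⟨S, hSC⟩ := exists_cantorScheme C (hne 0)
    (fun n I hI => by obtain ⟨a, b, -, rfl⟩ := hIcc n I hI; exact isCompact_Icc)
    (fun n I hI => by obtain ⟨a, b, hab, rfl⟩ := hIcc n I hI; exact Set.nonempty_Icc.2 hab)
    hm₀ hcount hγpos hgap
  have hq : ∀ k, 0 < (m (k + 1) : ℝ) * γ (k + 1) := fun k =>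
    mul_pos (Nat.cast_pos.2 (hm₀ _)) (hγpos _)
  have hkey : ∀ s, 0 < s → s < L →
      ∀ᶠ k in atTop, 1 ≤ (∏ i ∈ Ioc 0 k, (m i : ℝ)) * ((m (k + 1) : ℝ) * γ (k + 1)) ^ s := by
    intro s hs hsL
    filter_upwards [eventually_lt_of_lt_liminf hsL
      (isBoundedUnder_ge_of_liminf_ne_zero (hs.trans hsL).ne')] with k hk
    rw [← Finset.Icc_add_one_left_eq_Ioc, zero_add]
    exact Real.one_le_mul_rpow_of_lt_log_div
      (one_le_prod fun i _ => by exact_mod_cast hm₀ i) (hq k) hs hk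
  have hL : L ≤ 1 := by
    by_contra! h
    obtain ⟨σ, hσ1, hσL⟩ := exists_between h
    exact not_eventually_one_le_mul_rpow (tendsto_prod_Ioc_atTop hm) hq
      (S.prod_mul_le_two_mul_diam hm hγpos) hσ1 (hkey σ (one_pos.trans hσ1) hσL)
  refine ENNReal.ofReal_le_of_forall_pos_lt fun s hs hsL => ?_
  obtain ⟨N₀, hN₀⟩ := eventually_atTop.1 (hkey s hs hsL)
  exact (S.le_dimH_limit hm hγpos hs (hsL.le.trans hL) hN₀).trans
    (dimH_mono (Set.iInter_mono fun n => Set.sUnion_subset_sUnion (hSC n)))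

/-- Falconer's Example 4.6: lower bound for the Hausdorff dimension of a Cantor-type set.
`C n` is the (finite) collection of closed intervals making up the `n`-th stage `E n = ⋃₀ C n`. -/
theorem stmt12 (C : ℕ → Set (Set ℝ)) (m : ℕ → ℕ) (γ : ℕ → ℝ)
    (hfin : ∀ n, (C n).Finite)
    (hne : ∀ n, (C n).Nonempty)
    (hIcc : ∀ n, ∀ I ∈ C n, ∃ a b : ℝ, a ≤ b ∧ I = Set.Icc a b)
    (hnested : ∀ n, ∀ J ∈ C (n + 1), ∃ I ∈ C n, J ⊆ I)
    (hm : ∀ n, 2 ≤ m n)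
    (hcount : ∀ n, ∀ I ∈ C n, m (n + 1) ≤ {J ∈ C (n + 1) | J ⊆ I}.ncard)
    (hγpos : ∀ n, 0 < γ n)
    (hγmono : ∀ n, γ (n + 1) < γ n)
    (hgap : ∀ n, ∀ I ∈ C n, ∀ J ∈ C n, I ≠ J → ∀ x ∈ I, ∀ y ∈ J, γ n ≤ |x - y|) :
    ENNReal.ofReal
        (liminf (fun n =>
            Real.log (∏ i ∈ Finset.Icc 1 n, (m i : ℝ)) /
              (-Real.log ((m (n + 1) : ℝ) * γ (n + 1)))) atTop) ≤
      dimH (⋂ n, ⋃₀ C n) :=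
  stmt12_general C m γ hne hIcc hm hcount hγpos hgap
end
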